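/- If φ: C[X] → Δ+(X) is defined by φ([x,r]) = r·δ_x for r>0 and φ([x,0]) = the zero measure, then φ is a homeomorphism from the geometric cone C[X] onto the set Δ+(X) of nonnegative weighted Dirac masses (including the zero measure), where Δ+(X) carries the weak topology induced by bounded continuous functions. -/
import Mathlib


open MeasureTheory Topology Filter Set
open scoped NNReal ENNReal BoundedContinuousFunction

noncomputable section

namespace UOT

variable (X : Type*)

/-- The equivalence relation on `X × ℝ≥0` identifying all points with radius `0`. -/
def coneSetoid : Setoid (X × ℝ≥0) where
  r p q := p = q ∨ (p.2 = 0 ∧ q.2 = 0)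
  iseqv := by
    refine ⟨fun p => Or.inl rfl, ?_, ?_⟩
    · rintro p q (rfl | h)
      · exact Or.inl rfl
      · exact Or.inr ⟨h.2, h.1⟩
    · rintro p q r hpq hqr
      rcases hpq with rfl | h
      · exact hqr
      · rcases hqr with rfl | h'
        · exact Or.inr h
        · exact Or.inr ⟨h.1, h'.2⟩

/-- The geometric cone over `X`. -/
def Cone := Quotient (coneSetoid X)

/-- The canonical map sending `(x, r)` to the point `[x, r]` of the cone. -/
def Cone.mk (x : X) (r : ℝ≥0) : Cone X := Quotient.mk (coneSetoid X) (x, r)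

/-- The vertex `o` of the cone. -/
def Cone.vertex [Nonempty X] : Cone X := Cone.mk X (Classical.arbitrary X) 0

/-- The radial coordinate `r` of a point of the cone. -/
def Cone.radius : Cone X → ℝ≥0 :=
  Quotient.lift (fun p => p.2) (by
    rintro p q (rfl | ⟨h1, h2⟩)
    · rfl
    · simp [h1, h2])

/-- The base point `x` of a point of the cone (an arbitrary point of `X` at the vertex). -/
def Cone.basePt [Nonempty X] : Cone X → X :=
  Quotient.lift (fun p => if p.2 = 0 then Classical.arbitrary X else p.1) (by
    rintro p q (rfl | ⟨h1, h2⟩)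
    · rfl
    · simp [h1, h2])

/-- Radial rescaling `λ • [x, r] = [x, λ * r]` on the cone. -/
def Cone.smul (c : ℝ≥0) : Cone X → Cone X :=
  Quotient.lift (fun p => Cone.mk X p.1 (c * p.2)) (by
    rintro p q (rfl | ⟨h1, h2⟩)
    · rfl
    · apply Quotient.sound
      exact Or.inr ⟨by simp [h1], by simp [h2]⟩)

variable [TopologicalSpace X]

/-- The cone topology: a set is open iff its preimage in `X × ℝ≥0` is open and, when it
contains the vertex, it contains a whole strip `{[x, r] : r < ε}`. -/
instance : TopologicalSpace (Cone X) where
  IsOpen U := IsOpen ((fun p : X × ℝ≥0 => Cone.mk X p.1 p.2) ⁻¹' U) ∧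
      ∀ x : X, Cone.mk X x 0 ∈ U →
        ∃ ε : ℝ≥0, 0 < ε ∧ ∀ (y : X) (r : ℝ≥0), r < ε → Cone.mk X y r ∈ U
  isOpen_univ := ⟨isOpen_univ, fun _ _ => ⟨1, one_pos, fun _ _ _ => mem_univ _⟩⟩
  isOpen_inter := by
    rintro s t ⟨hs1, hs2⟩ ⟨ht1, ht2⟩
    refine ⟨hs1.inter ht1, fun x hx => ?_⟩
    obtain ⟨ε₁, hε₁, h₁⟩ := hs2 x hx.1
    obtain ⟨ε₂, hε₂, h₂⟩ := ht2 x hx.2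
    exact ⟨min ε₁ ε₂, lt_min hε₁ hε₂, fun y r hr =>
      ⟨h₁ y r (hr.trans_le (min_le_left _ _)), h₂ y r (hr.trans_le (min_le_right _ _))⟩⟩
  isOpen_sUnion := by
    intro S hS
    constructor
    · rw [Set.preimage_sUnion]
      exact isOpen_biUnion fun t ht => (hS t ht).1
    · intro x hx
      obtain ⟨t, ht, hxt⟩ := hx
      obtain ⟨ε, hε, h⟩ := (hS t ht).2 x hxt
      exact ⟨ε, hε, fun y r hr => ⟨t, ht, h y r hr⟩⟩

instance : MeasurableSpace (Cone X) := borel (Cone X)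

instance : BorelSpace (Cone X) := ⟨rfl⟩

/-- On a product of cones we use the Borel σ-algebra of the product topology. -/
instance (priority := 2000) prodConeMeasurableSpace (X₁ X₂ : Type*) [TopologicalSpace X₁]
    [TopologicalSpace X₂] : MeasurableSpace (Cone X₁ × Cone X₂) :=
  borel (Cone X₁ × Cone X₂)

instance (priority := 2000) prodConeBorelSpace (X₁ X₂ : Type*) [TopologicalSpace X₁]
    [TopologicalSpace X₂] : BorelSpace (Cone X₁ × Cone X₂) := ⟨rfl⟩

variable {X}

/-- The scaled Dirac measure `r • δ_x` as a finite measure. -/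
def diracFM {Y : Type*} [MeasurableSpace Y] (x : Y) : FiniteMeasure Y :=
  ⟨Measure.dirac x, inferInstance⟩

/-- The canonical map `[x, r] ↦ r • δ_x` from the cone to finite measures. -/
def coneToFM (X : Type*) [TopologicalSpace X] [MeasurableSpace X] :
    Cone X → FiniteMeasure X :=
  Quotient.lift (fun p : X × ℝ≥0 => p.2 • diracFM p.1) (by
    rintro p q (rfl | ⟨h1, h2⟩)
    · rfl
    · simp [h1, h2])

/-- A finite measure is discrete if it is a finite nonnegative combination of Dirac masses. -/
def IsDiscreteFM {Y : Type*} [MeasurableSpace Y] (μ : FiniteMeasure Y) : Prop :=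
  ∃ (n : ℕ) (c : Fin n → ℝ≥0) (x : Fin n → Y), μ = ∑ i, c i • diracFM (x i)

section Product

variable {X₁ X₂ : Type*} [TopologicalSpace X₁] [TopologicalSpace X₂]

/-- Radial `1`-homogeneity of a cost function on the product cone. -/
def RadiallyHomogeneous (H : Cone X₁ × Cone X₂ → ℝ≥0∞) : Prop :=
  ∀ (x₁ : X₁) (x₂ : X₂) (r₁ r₂ lam : ℝ≥0), 0 < lam →
    H (Cone.mk X₁ x₁ (lam * r₁), Cone.mk X₂ x₂ (lam * r₂)) =
      (lam : ℝ≥0∞) * H (Cone.mk X₁ x₁ r₁, Cone.mk X₂ x₂ r₂)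

/-- Radial convexity of a cost function on the product cone: every radial section is convex. -/
def RadiallyConvex (H : Cone X₁ × Cone X₂ → ℝ≥0∞) : Prop :=
  ∀ (x₁ : X₁) (x₂ : X₂) (a₁ a₂ b₁ b₂ t : ℝ≥0), t ≤ 1 →
    H (Cone.mk X₁ x₁ (t * a₁ + (1 - t) * b₁), Cone.mk X₂ x₂ (t * a₂ + (1 - t) * b₂)) ≤
      (t : ℝ≥0∞) * H (Cone.mk X₁ x₁ a₁, Cone.mk X₂ x₂ a₂) +
        ((1 - t : ℝ≥0) : ℝ≥0∞) * H (Cone.mk X₁ x₁ b₁, Cone.mk X₂ x₂ b₂)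

/-- Properness: `H` is not identically `+∞`. -/
def ProperCost (H : Cone X₁ × Cone X₂ → ℝ≥0∞) : Prop := ∃ y, H y ≠ ⊤

variable [MeasurableSpace X₁] [MeasurableSpace X₂]

/-- First `p`-homogeneous marginal `h₁^p(α) = (x₁)_♯ (r₁^p · α)`. -/
def homMarginalFst [Nonempty X₁] (p : ℝ) (α : Measure (Cone X₁ × Cone X₂)) : Measure X₁ :=
  Measure.map (fun y : Cone X₁ × Cone X₂ => Cone.basePt X₁ y.1)
    (α.withDensity fun y => (Cone.radius X₁ y.1 : ℝ≥0∞) ^ p)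

/-- Second `p`-homogeneous marginal `h₂^p(α) = (x₂)_♯ (r₂^p · α)`. -/
def homMarginalSnd [Nonempty X₂] (p : ℝ) (α : Measure (Cone X₁ × Cone X₂)) : Measure X₂ :=
  Measure.map (fun y : Cone X₁ × Cone X₂ => Cone.basePt X₂ y.2)
    (α.withDensity fun y => (Cone.radius X₂ y.2 : ℝ≥0∞) ^ p)

variable [Nonempty X₁] [Nonempty X₂]

/-- `α ∈ H^p(μ₁, μ₂)`: a (finite Radon) homogeneous coupling with finite `p`-th radial
moments and `p`-homogeneous marginals `μ₁, μ₂`. -/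
def IsHomCoupling (p : ℝ) (α : Measure (Cone X₁ × Cone X₂))
    (μ₁ : Measure X₁) (μ₂ : Measure X₂) : Prop :=
  IsFiniteMeasure α ∧
    (∫⁻ y, ((Cone.radius X₁ y.1 : ℝ≥0∞) ^ p + (Cone.radius X₂ y.2 : ℝ≥0∞) ^ p) ∂α) ≠ ⊤ ∧
    homMarginalFst p α = μ₁ ∧ homMarginalSnd p α = μ₂

/-- The unbalanced optimal transport cost `U_H`. -/
def UH (H : Cone X₁ × Cone X₂ → ℝ≥0∞) (μ₁ : Measure X₁) (μ₂ : Measure X₂) : ℝ≥0∞ :=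
  ⨅ (α : Measure (Cone X₁ × Cone X₂)) (_ : IsHomCoupling 1 α μ₁ μ₂), ∫⁻ y, H y ∂α

/-- The truncated product cone `C_R[X₁, X₂]`: both radii at most `R`. -/
def prodConeTrunc (R : ℝ≥0) : Set (Cone X₁ × Cone X₂) :=
  {y | Cone.radius X₁ y.1 ≤ R ∧ Cone.radius X₂ y.2 ≤ R}

/-- Membership of a pair of bounded continuous potentials in the dual constraint set `Φ_H`. -/
def InPhi (H : Cone X₁ × Cone X₂ → ℝ≥0∞) (φ₁ : X₁ →ᵇ ℝ) (φ₂ : X₂ →ᵇ ℝ) : Prop :=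
  ∀ (x₁ : X₁) (x₂ : X₂) (r₁ r₂ : ℝ≥0),
    ENNReal.ofReal (φ₁ x₁ * r₁ + φ₂ x₂ * r₂) ≤ H (Cone.mk X₁ x₁ r₁, Cone.mk X₂ x₂ r₂)

/-- `H`-cyclical monotonicity of a subset of the product cone. -/
def HCyclicallyMonotone (H : Cone X₁ × Cone X₂ → ℝ≥0∞)
    (Γ : Set (Cone X₁ × Cone X₂)) : Prop :=
  ∀ (N : ℕ) (y : Fin N → Cone X₁ × Cone X₂), (∀ i, y i ∈ Γ) → ∀ σ : Equiv.Perm (Fin N),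
    ∑ i, H (y i) ≤ ∑ i, H ((y i).1, (y (σ i)).2)

/-- A radial convex cone in the product cone. -/
def IsRadialConvexCone (Γ : Set (Cone X₁ × Cone X₂)) : Prop :=
  ∀ (x₁ : X₁) (x₂ : X₂) (a₁ a₂ b₁ b₂ lam mu : ℝ≥0),
    (Cone.mk X₁ x₁ a₁, Cone.mk X₂ x₂ a₂) ∈ Γ → (Cone.mk X₁ x₁ b₁, Cone.mk X₂ x₂ b₂) ∈ Γ →
      (Cone.mk X₁ x₁ (lam * a₁ + mu * b₁), Cone.mk X₂ x₂ (lam * a₂ + mu * b₂)) ∈ Γ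

end Product

/-- Convexity (with scalars in `ℝ≥0`) of an `ℝ≥0∞`-valued function on a module. -/
def ConvexENN {E : Type*} [AddCommMonoid E] [SMul ℝ≥0 E] (f : E → ℝ≥0∞) : Prop :=
  ∀ (a b : E) (t : ℝ≥0), t ≤ 1 →
    f (t • a + (1 - t) • b) ≤ (t : ℝ≥0∞) * f a + ((1 - t : ℝ≥0) : ℝ≥0∞) * f b

/-- The lower semicontinuous convex envelope: the largest lsc convex function below `F`. -/
def lscConvexHull {E : Type*} [TopologicalSpace E] [AddCommMonoid E] [SMul ℝ≥0 E]
    (F : E → ℝ≥0∞) : E → ℝ≥0∞ :=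
  fun e => ⨆ (g : E → ℝ≥0∞) (_ : LowerSemicontinuous g ∧ ConvexENN g ∧ g ≤ F), g e

/-- The convex envelope: the largest convex function below `F`. -/
def convexHullFn {E : Type*} [AddCommMonoid E] [SMul ℝ≥0 E] (F : E → ℝ≥0∞) : E → ℝ≥0∞ :=
  fun e => ⨆ (g : E → ℝ≥0∞) (_ : ConvexENN g ∧ g ≤ F), g e

/-- The lower semicontinuous envelope: the largest lsc function below `F`. -/
def lscHull {E : Type*} [TopologicalSpace E] (F : E → ℝ≥0∞) : E → ℝ≥0∞ :=
  fun e => ⨆ (g : E → ℝ≥0∞) (_ : LowerSemicontinuous g ∧ g ≤ F), g e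

end UOT
namespace UOT

section Aux

open BoundedContinuousFunction

variable {X : Type*} [TopologicalSpace X]

lemma mk_surjective (c : Cone X) : ∃ x r, c = Cone.mk X x r := by
  obtain ⟨⟨x, r⟩, h⟩ := Quotient.exists_rep c
  exact ⟨x, r, h.symm⟩

lemma isOpen_cone_iff {U : Set (Cone X)} : IsOpen U ↔
    (IsOpen ((fun p : X × ℝ≥0 => Cone.mk X p.1 p.2) ⁻¹' U) ∧
      ∀ x : X, Cone.mk X x 0 ∈ U →
        ∃ ε : ℝ≥0, 0 < ε ∧ ∀ (y : X) (r : ℝ≥0), r < ε → Cone.mk X y r ∈ U) := Iff.rfl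

lemma continuous_coneMk : Continuous (fun p : X × ℝ≥0 => Cone.mk X p.1 p.2) :=
  continuous_def.mpr fun _ hU => (isOpen_cone_iff.mp hU).1

lemma isOpen_strip (ε : ℝ≥0) : IsOpen {c : Cone X | Cone.radius X c < ε} := by
  rw [isOpen_cone_iff]
  constructor
  · have : ((fun p : X × ℝ≥0 => Cone.mk X p.1 p.2) ⁻¹' {c | Cone.radius X c < ε}) =
        Set.univ ×ˢ Set.Iio ε := by
      ext ⟨y, s⟩
      simp only [Set.mem_preimage, Set.mem_setOf_eq, Set.mem_prod, Set.mem_univ, true_and,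
        Set.mem_Iio]
      rfl
    rw [this]
    exact isOpen_univ.prod isOpen_Iio
  · intro x hx
    exact ⟨ε, hx, fun y r hr => hr⟩

lemma nhds_vertex_basis (x : X) :
    (𝓝 (Cone.mk X x 0)).HasBasis (fun ε : ℝ≥0 => 0 < ε)
      (fun ε => {c : Cone X | Cone.radius X c < ε}) := by
  apply (nhds_basis_opens (Cone.mk X x 0)).to_hasBasis
  · rintro U ⟨hcU, hU⟩
    obtain ⟨ε, hε, h⟩ := (isOpen_cone_iff.mp hU).2 x hcU
    refine ⟨ε, hε, fun c hc => ?_⟩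
    obtain ⟨y, s, rfl⟩ := mk_surjective c
    exact h y s hc
  · intro ε hε
    exact ⟨{c : Cone X | Cone.radius X c < ε}, ⟨hε, isOpen_strip ε⟩, subset_rfl⟩

lemma isOpen_image_coneMk {P : Set (X × ℝ≥0)} (hP : IsOpen P) (hP0 : ∀ p ∈ P, p.2 ≠ 0) :
    IsOpen ((fun p : X × ℝ≥0 => Cone.mk X p.1 p.2) '' P) := by
  rw [isOpen_cone_iff]
  constructor
  · have : (fun p : X × ℝ≥0 => Cone.mk X p.1 p.2) ⁻¹'
        ((fun p : X × ℝ≥0 => Cone.mk X p.1 p.2) '' P) = P := by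
      ext ⟨c, d⟩
      simp only [Set.mem_preimage, Set.mem_image]
      constructor
      · rintro ⟨⟨a, b⟩, hq, hqp⟩
        rcases Quotient.exact hqp with h | ⟨h1, h2⟩
        · rwa [← h]
        · exact absurd h1 (hP0 _ hq)
      · intro h
        exact ⟨(c, d), h, rfl⟩
    rw [this]
    exact hP
  · rintro x ⟨⟨a, b⟩, hq, hqp⟩
    rcases Quotient.exact hqp with h | ⟨h1, h2⟩
    · exact absurd (congrArg Prod.snd h) (hP0 _ hq)
    · exact absurd h1 (hP0 _ hq)

lemma nhds_le_map_coneMk {x : X} {r : ℝ≥0} (hr : r ≠ 0) :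
    𝓝 (Cone.mk X x r) ≤ Filter.map (fun p : X × ℝ≥0 => Cone.mk X p.1 p.2) (𝓝 (x, r)) := by
  intro s hs
  rw [Filter.mem_map] at hs
  obtain ⟨P, hPsub, hPopen, hPmem⟩ := mem_nhds_iff.mp hs
  set Q := P ∩ {p : X × ℝ≥0 | p.2 ≠ 0} with hQ
  have hQopen : IsOpen Q := hPopen.inter (IsOpen.preimage continuous_snd isOpen_ne)
  have himg : IsOpen ((fun p : X × ℝ≥0 => Cone.mk X p.1 p.2) '' Q) :=
    isOpen_image_coneMk hQopen (fun p hp => hp.2)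
  refine mem_nhds_iff.mpr ⟨(fun p : X × ℝ≥0 => Cone.mk X p.1 p.2) '' Q, ?_, himg,
    ⟨(x, r), ⟨hPmem, hr⟩, rfl⟩⟩
  rintro c ⟨q, hq, rfl⟩
  exact hPsub hq.1

variable [MeasurableSpace X] [OpensMeasurableSpace X] [T1Space X]

lemma testAgainstNN_coneToFM (x : X) (r : ℝ≥0) (f : X →ᵇ ℝ≥0) :
    (coneToFM X (Cone.mk X x r)).testAgainstNN f = r * f x := by
  have h1 : ((coneToFM X (Cone.mk X x r)) : Measure X) = (r : ℝ≥0∞) • Measure.dirac x := by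
    show ((r • diracFM x : FiniteMeasure X) : Measure X) = _
    rw [FiniteMeasure.toMeasure_smul, ENNReal.smul_def]
    rfl
  rw [FiniteMeasure.testAgainstNN, h1, MeasureTheory.lintegral_smul_measure,
    MeasureTheory.lintegral_dirac x (fun y => (f y : ℝ≥0∞))]
  simp

lemma coneToFM_injective : Function.Injective (coneToFM X) := by
  intro c d h
  obtain ⟨x, r, rfl⟩ := mk_surjective c
  obtain ⟨y, s, rfl⟩ := mk_surjective d
  have hm : r = s := by
    have h1 : (coneToFM X (Cone.mk X x r)).testAgainstNN 1 = r := by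
      rw [testAgainstNN_coneToFM]; simp
    have h2 : (coneToFM X (Cone.mk X y s)).testAgainstNN 1 = s := by
      rw [testAgainstNN_coneToFM]; simp
    rw [h, h2] at h1
    exact h1.symm
  subst hm
  rcases eq_or_ne r 0 with rfl | hr
  · exact Quotient.sound (Or.inr ⟨rfl, rfl⟩)
  · have hxy : x = y := by
      by_contra hne
      have hme : ((coneToFM X (Cone.mk X x r)) : Measure X) {x} =
          ((coneToFM X (Cone.mk X y r)) : Measure X) {x} := by rw [h]
      have h1 : ((coneToFM X (Cone.mk X x r)) : Measure X) = (r : ℝ≥0∞) • Measure.dirac x := by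
        show ((r • diracFM x : FiniteMeasure X) : Measure X) = _
        rw [FiniteMeasure.toMeasure_smul, ENNReal.smul_def]; rfl
      have h2 : ((coneToFM X (Cone.mk X y r)) : Measure X) = (r : ℝ≥0∞) • Measure.dirac y := by
        show ((r • diracFM y : FiniteMeasure X) : Measure X) = _
        rw [FiniteMeasure.toMeasure_smul, ENNReal.smul_def]; rfl
      rw [h1, h2] at hme
      simp only [Measure.smul_apply, smul_eq_mul, Measure.dirac_apply' _ (measurableSet_singleton x)] at hme
      rw [Set.indicator_of_mem (Set.mem_singleton x), Set.indicator_of_notMem (by simpa using (Ne.symm hne))] at hme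
      simp only [Pi.one_apply, mul_one, mul_zero] at hme
      exact hr (by exact_mod_cast hme)
    rw [hxy]

end Aux

/-- The map `φ : C[X] → Δ₊(X)`, `[x,r] ↦ r·δ_x` (with the vertex mapped to
the zero measure), is a homeomorphism of the geometric cone onto the set of nonnegative
weighted Dirac masses with the weak topology: it is a topological embedding whose range is
exactly `Δ₊(X) = {r·δ_x : r ≥ 0, x ∈ X}`. -/
theorem cone_homeomorphic_to_weighted_diracs
    (X : Type*) [TopologicalSpace X] [T2Space X] [CompletelyRegularSpace X]
    [MeasurableSpace X] [BorelSpace X] :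
    Topology.IsEmbedding (coneToFM X) ∧
      Set.range (coneToFM X) =
        {μ : FiniteMeasure X | ∃ (r : ℝ≥0) (x : X), μ = r • diracFM x} := by
  constructor
  · refine ⟨Topology.isInducing_iff_nhds.mpr ?_, coneToFM_injective⟩
    intro c
    obtain ⟨x, r, rfl⟩ := mk_surjective c
    apply le_antisymm
    · -- continuity of `coneToFM`
      rw [← Filter.tendsto_iff_comap,
        MeasureTheory.FiniteMeasure.tendsto_iff_forall_testAgainstNN_tendsto]
      intro f
      rcases eq_or_ne r 0 with rfl | hr
      · -- at the vertex
        rw [testAgainstNN_coneToFM]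
        simp only [zero_mul]
        rw [(nhds_vertex_basis x).tendsto_iff NNReal.nhds_zero_basis]
        intro ε hε
        set D : ℝ≥0 := nndist f (0 : X →ᵇ ℝ≥0) with hD
        have hD1 : (0 : ℝ≥0) < D + 1 := by positivity
        refine ⟨ε / (D + 1), by positivity, fun c hc => ?_⟩
        obtain ⟨y, s, rfl⟩ := mk_surjective c
        rw [Set.mem_Iio, testAgainstNN_coneToFM]
        have hfy : f y ≤ D := by
          have := BoundedContinuousFunction.nndist_coe_le_nndist (f := f)
            (g := (0 : X →ᵇ ℝ≥0)) y
          simpa [NNReal.nndist_zero_eq_val'] using this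
        have hs : s < ε / (D + 1) := hc
        calc s * f y ≤ s * (D + 1) := by
              exact mul_le_mul_right (le_trans hfy (le_add_of_nonneg_right zero_le_one)) s
          _ < (ε / (D + 1)) * (D + 1) := by
              exact mul_lt_mul_of_pos_right hs hD1
          _ = ε := div_mul_cancel₀ ε hD1.ne'
      · -- at a point with positive radius
        apply Filter.Tendsto.mono_left _ (nhds_le_map_coneMk hr)
        rw [Filter.tendsto_map'_iff]
        have hcomp : ((fun c => (coneToFM X c).testAgainstNN f) ∘
            fun p : X × ℝ≥0 => Cone.mk X p.1 p.2) = fun p : X × ℝ≥0 => p.2 * f p.1 := by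
          funext p
          exact testAgainstNN_coneToFM p.1 p.2 f
        rw [hcomp, testAgainstNN_coneToFM]
        exact (continuous_snd.mul (f.continuous.comp continuous_fst)).tendsto (x, r)
    · -- the cone topology is induced by the weak topology
      intro s hs
      rcases eq_or_ne r 0 with rfl | hr
      · -- at the vertex
        obtain ⟨ε, hε, hsub⟩ := (nhds_vertex_basis x).mem_iff.mp hs
        refine Filter.mem_comap.mpr
          ⟨(fun μ : FiniteMeasure X => μ.testAgainstNN 1) ⁻¹' Set.Iio ε, ?_, ?_⟩
        · refine (IsOpen.preimage
            (MeasureTheory.FiniteMeasure.continuous_testAgainstNN_eval 1) isOpen_Iio).mem_nhds ?_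
          rw [Set.mem_preimage, testAgainstNN_coneToFM]
          simpa using hε
        · intro c hc
          apply hsub
          obtain ⟨y, t, rfl⟩ := mk_surjective c
          have h1 : (coneToFM X (Cone.mk X y t)).testAgainstNN 1 = t := by
            rw [testAgainstNN_coneToFM, BoundedContinuousFunction.coe_one, Pi.one_apply, mul_one]
          have h2 := Set.mem_preimage.mp (Set.mem_preimage.mp hc)
          rw [Set.mem_Iio] at h2
          exact lt_of_le_of_lt (le_of_eq h1.symm) h2
      · -- at a point with positive radius
        obtain ⟨U, hUsub, hUopen, hUmem⟩ := mem_nhds_iff.mp hs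
        have hpre : (fun p : X × ℝ≥0 => Cone.mk X p.1 p.2) ⁻¹' U ∈ 𝓝 (x, r) :=
          ((isOpen_cone_iff.mp hUopen).1).mem_nhds hUmem
        rw [mem_nhds_prod_iff] at hpre
        obtain ⟨U₁, hU₁, V, hV, hprod⟩ := hpre
        obtain ⟨U₁', hU₁'sub, hU₁'open, hU₁'mem⟩ := mem_nhds_iff.mp hU₁
        obtain ⟨δ, hδ, hball⟩ := Metric.mem_nhds_iff.mp hV
        obtain ⟨f₀, f₀cont, f₀x, f₀K⟩ := CompletelyRegularSpace.completely_regular x U₁'ᶜ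
          hU₁'open.isClosed_compl (by simpa using hU₁'mem)
        set g : X → ℝ≥0 := fun y => Real.toNNReal (1 - (f₀ y : ℝ)) with hg
        have gcont : Continuous g :=
          continuous_real_toNNReal.comp (continuous_const.sub
            (continuous_subtype_val.comp f₀cont))
        have gle : ∀ y, g y ≤ 1 := by
          intro y
          rw [hg]
          have h0 : (0 : ℝ) ≤ (f₀ y : ℝ) := (f₀ y).2.1
          simpa using Real.toNNReal_le_toNNReal (by linarith : (1 : ℝ) - (f₀ y : ℝ) ≤ 1)
        have hbd : ∀ y z : X, dist (g y) (g z) ≤ 2 := by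
          intro y z
          rw [NNReal.dist_eq]
          have h1 : ((g y : ℝ)) ≤ 1 := NNReal.coe_le_coe.mpr (gle y)
          have h2 : ((g z : ℝ)) ≤ 1 := NNReal.coe_le_coe.mpr (gle z)
          have h3 : (0 : ℝ) ≤ (g y : ℝ) := (g y).coe_nonneg
          have h4 : (0 : ℝ) ≤ (g z : ℝ) := (g z).coe_nonneg
          rw [abs_le]
          constructor <;> linarith
        set h : X →ᵇ ℝ≥0 := ⟨⟨g, gcont⟩, ⟨2, hbd⟩⟩ with hh
        have hgx : g x = 1 := by
          rw [hg]
          simp only [f₀x]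
          norm_num
        have hg0 : ∀ y, y ∉ U₁' → g y = 0 := by
          intro y hy
          have : f₀ y = 1 := f₀K (by simpa using hy)
          rw [hg]
          simp only [this]
          norm_num
        refine Filter.mem_comap.mpr
          ⟨((fun μ : FiniteMeasure X => μ.testAgainstNN 1) ⁻¹' Metric.ball r δ) ∩
            ((fun μ : FiniteMeasure X => μ.testAgainstNN h) ⁻¹' Set.Ioi 0), ?_, ?_⟩
        · refine Filter.inter_mem ?_ ?_
          · refine (IsOpen.preimage
              (MeasureTheory.FiniteMeasure.continuous_testAgainstNN_eval 1)
              Metric.isOpen_ball).mem_nhds ?_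
            rw [Set.mem_preimage, testAgainstNN_coneToFM]
            simpa using Metric.mem_ball_self (x := r) hδ
          · refine (IsOpen.preimage
              (MeasureTheory.FiniteMeasure.continuous_testAgainstNN_eval h)
              isOpen_Ioi).mem_nhds ?_
            rw [Set.mem_preimage, testAgainstNN_coneToFM]
            have : h x = 1 := hgx
            rw [this, Set.mem_Ioi, mul_one]
            exact pos_iff_ne_zero.mpr hr
        · rintro c ⟨hc1, hc2⟩
          obtain ⟨y, t, rfl⟩ := mk_surjective c
          rw [Set.mem_preimage, testAgainstNN_coneToFM] at hc1 hc2
          have hyU : y ∈ U₁' := by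
            by_contra hy
            have : h y = 0 := hg0 y hy
            rw [this, mul_zero] at hc2
            exact lt_irrefl _ (Set.mem_Ioi.mp hc2)
          have htV : t ∈ V := by
            apply hball
            simpa using hc1
          exact hUsub (hprod (Set.mk_mem_prod (hU₁'sub hyU) htV))
  · ext μ
    constructor
    · rintro ⟨c, rfl⟩
      obtain ⟨x, r, rfl⟩ := mk_surjective c
      exact ⟨r, x, rfl⟩
    · rintro ⟨r, x, rfl⟩
      exact ⟨Cone.mk X x r, rfl⟩

end UOT
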